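/- Let σ satisfy σ(u)² ≤ c_0 exp(c_1 u²/2) with c_1 < 1. With x^{(q)} uniform and independent on spheres S^{d_q-1}(√d_q) for q = 1,...,Q, fixed unit vectors w^{(q)}, and coefficients α_q = τ^{(q)} r_q/R where α_1 → 1 and α_q → 0 for q ≥ 2 as d → ∞ uniformly over τ in a small box around 1: there exist ε_0 > 0 and d_0 such that sup_{d ≥ d_0} sup_{τ ∈ [1-ε_0, 1+ε_0]^Q} E[σ(Σ_q α_q ⟨w^{(q)}, x^{(q)}⟩)²] < ∞. -/

import Mathlib

open MeasureTheory

/-- Normalizing constant of the one-coordinate law on `S^{n-1}(√n)`. -/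
noncomputable def projConst (n : ℕ) : ℝ :=
  Real.Gamma ((n : ℝ) - 1) /
    ((2 : ℝ) ^ ((n : ℝ) - 2) * Real.sqrt n * (Real.Gamma (((n : ℝ) - 1) / 2)) ^ 2)

/-- Density of the one-coordinate law on `S^{n-1}(√n)`. -/
noncomputable def projDensity (n : ℕ) (t : ℝ) : ℝ :=
  if t ^ 2 ≤ (n : ℝ) then projConst n * (1 - t ^ 2 / (n : ℝ)) ^ (((n : ℝ) - 3) / 2) else 0

/-- The law of one coordinate of a uniform point on `S^{n-1}(√n)`. -/
noncomputable def projMeasure (n : ℕ) : Measure ℝ :=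
  MeasureTheory.volume.withDensity (fun t => ENNReal.ofReal (projDensity n t))

/-!
Put `c = max c₁ 0` and choose `c < λ < 1` and `ε₀ > 0` with `c (1 + ε₀)² ≤ λ`. Whatever `d` is,
`|τ_q - 1| ≤ ε₀` gives `∑ α_q² ≤ (1 + ε₀)²`, so by Cauchy–Schwarz
`σ(∑ α_q x_q)² ≤ c₀ ∏_q exp(λ x_q² / 2)` and the expectation factorises over `q`.
Legendre's duplication formula and the log-convexity of `Γ` give `C_n ≤ 1`, and with
`1 - u ≤ e^{-u}` the coordinate density is dominated by a Gaussian of variance `n / (n - 3)`.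
Hence each factor is at most `√(4π / (1 - λ))` once `d_q ≥ 6 / (1 - λ)`, which holds for large `d`
because `η_q > 0`.
-/

open Real Filter Finset Topology

theorem Real.Gamma_add_half_le_sqrt_mul_Gamma {x : ℝ} (hx : 0 < x) :
    Gamma (x + 1 / 2) ≤ √x * Gamma x := by
  have hconv := Gamma_mul_add_mul_le_rpow_Gamma_mul_rpow_Gamma hx (by linarith : 0 < x + 1)
    (by norm_num : (0 : ℝ) < 1 / 2) (by norm_num : (0 : ℝ) < 1 / 2) (by norm_num)
  have hG : 0 ≤ Gamma x := (Gamma_pos_of_pos hx).le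
  calc Gamma (x + 1 / 2) = Gamma (1 / 2 * x + 1 / 2 * (x + 1)) := by ring_nf
    _ ≤ √(Gamma x) * √(x * Gamma x) := by
      simpa only [sqrt_eq_rpow, Gamma_add_one hx.ne'] using hconv
    _ = √x * Gamma x := by
      rw [← sqrt_mul hG, show Gamma x * (x * Gamma x) = x * Gamma x ^ 2 by ring,
        sqrt_mul hx.le, sqrt_sq hG]

lemma projConst_eq {n : ℕ} (hn : 2 ≤ n) :
    projConst n = Gamma (((n : ℝ) - 1) / 2 + 1 / 2) /
      (√π * √n * Gamma (((n : ℝ) - 1) / 2)) := by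
  have hn' : (2 : ℝ) ≤ n := by exact_mod_cast hn
  have hdup := Gamma_mul_Gamma_add_half (((n : ℝ) - 1) / 2)
  rw [show 2 * (((n : ℝ) - 1) / 2) = n - 1 by ring,
    show 1 - ((n : ℝ) - 1) = -((n : ℝ) - 2) by ring, rpow_neg zero_le_two] at hdup
  have hG : 0 < Gamma (((n : ℝ) - 1) / 2) := Gamma_pos_of_pos (by linarith)
  have h2 : 0 < (2 : ℝ) ^ ((n : ℝ) - 2) := by positivity
  rw [projConst, div_eq_div_iff (by positivity) (by positivity)]
  field_simp at hdup ⊢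
  exact hdup.symm

lemma projConst_le_one {n : ℕ} (hn : 2 ≤ n) : projConst n ≤ 1 := by
  have hn' : (2 : ℝ) ≤ n := by exact_mod_cast hn
  set s := ((n : ℝ) - 1) / 2
  have hs : 0 < s := by simp only [s]; linarith
  have hG : 0 < Gamma s := Gamma_pos_of_pos hs
  rw [projConst_eq hn, div_le_one (by positivity)]
  calc Gamma (s + 1 / 2) ≤ √s * Gamma s := Gamma_add_half_le_sqrt_mul_Gamma hs
    _ ≤ √n * Gamma s := by gcongr; simp only [s]; linarith
    _ ≤ √π * √n * Gamma s := by
      gcongr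
      exact le_mul_of_one_le_left (sqrt_nonneg _) (one_le_sqrt.mpr (by linarith [pi_gt_three]))

lemma projConst_nonneg {n : ℕ} (hn : 2 ≤ n) : 0 ≤ projConst n := by
  have hn' : (2 : ℝ) ≤ n := by exact_mod_cast hn
  rw [projConst_eq hn]
  have : 0 < ((n : ℝ) - 1) / 2 := by linarith
  positivity

lemma projDensity_nonneg {n : ℕ} (hn : 2 ≤ n) (t : ℝ) : 0 ≤ projDensity n t := by
  unfold projDensity
  split_ifs with ht
  · have : 0 ≤ 1 - t ^ 2 / n := by
      rw [sub_nonneg, div_le_one (by positivity)]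
      exact ht
    exact mul_nonneg (projConst_nonneg hn) (rpow_nonneg this _)
  · exact le_rfl

lemma measurable_projDensity (n : ℕ) : Measurable (projDensity n) :=
  Measurable.ite (measurableSet_le (by fun_prop) measurable_const) (by fun_prop) measurable_const

lemma projDensity_le_exp {n : ℕ} (hn : 3 ≤ n) (t : ℝ) :
    projDensity n t ≤ exp (-(((n : ℝ) - 3) / (2 * n)) * t ^ 2) := by
  have hn' : (3 : ℝ) ≤ n := by exact_mod_cast hn
  unfold projDensity
  split_ifs with ht
  · have hu : 0 ≤ 1 - t ^ 2 / n := by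
      rw [sub_nonneg, div_le_one (by positivity)]
      exact ht
    calc projConst n * (1 - t ^ 2 / n) ^ (((n : ℝ) - 3) / 2)
        ≤ 1 * exp (-(t ^ 2 / n)) ^ (((n : ℝ) - 3) / 2) := by
          gcongr
          · exact projConst_le_one (by omega)
          · linarith [add_one_le_exp (-(t ^ 2 / n))]
      _ = exp (-(((n : ℝ) - 3) / (2 * n)) * t ^ 2) := by
          rw [one_mul, ← exp_mul]
          congr 1
          field_simp
  · positivity

lemma projDensity_mul_exp_le {n : ℕ} {l : ℝ} (hn : 3 ≤ n) (hnl : 6 ≤ n * (1 - l)) (t : ℝ) :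
    projDensity n t * exp (l * t ^ 2 / 2) ≤ exp (-((1 - l) / 4) * t ^ 2) := by
  have hn' : (3 : ℝ) ≤ n := by exact_mod_cast hn
  have hexponent :
      -(((n : ℝ) - 3) / (2 * n)) * t ^ 2 + l * t ^ 2 / 2 ≤ -((1 - l) / 4) * t ^ 2 := by
    have hgap : -(((n : ℝ) - 3) / (2 * n)) * t ^ 2 + l * t ^ 2 / 2 + (1 - l) / 4 * t ^ 2
        = t ^ 2 * (6 - n * (1 - l)) / (4 * n) := by
      field_simp
      ring
    have : t ^ 2 * (6 - n * (1 - l)) / (4 * n) ≤ 0 :=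
      div_nonpos_of_nonpos_of_nonneg (mul_nonpos_of_nonneg_of_nonpos (sq_nonneg t) (by linarith))
        (by positivity)
    linarith
  calc projDensity n t * exp (l * t ^ 2 / 2)
      ≤ exp (-(((n : ℝ) - 3) / (2 * n)) * t ^ 2) * exp (l * t ^ 2 / 2) := by
        gcongr
        exact projDensity_le_exp hn t
    _ ≤ exp (-((1 - l) / 4) * t ^ 2) := by
        rw [← exp_add]
        exact exp_le_exp.mpr hexponent

instance (n : ℕ) : SigmaFinite (projMeasure n) := SigmaFinite.withDensity_ofReal _

lemma integrable_projMeasure_iff {n : ℕ} (hn : 2 ≤ n) {g : ℝ → ℝ} :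
    Integrable g (projMeasure n) ↔ Integrable (fun t => projDensity n t * g t) := by
  rw [projMeasure, integrable_withDensity_iff_integrable_smul'
    (measurable_projDensity n).ennreal_ofReal (ae_of_all _ fun _ => ENNReal.ofReal_lt_top)]
  simp only [ENNReal.toReal_ofReal (projDensity_nonneg hn _), smul_eq_mul]

lemma integral_projMeasure_eq {n : ℕ} (hn : 2 ≤ n) (g : ℝ → ℝ) :
    ∫ t, g t ∂projMeasure n = ∫ t, projDensity n t * g t := by
  rw [projMeasure, integral_withDensity_eq_integral_toReal_smul
    (measurable_projDensity n).ennreal_ofReal (ae_of_all _ fun _ => ENNReal.ofReal_lt_top)]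
  simp only [ENNReal.toReal_ofReal (projDensity_nonneg hn _), smul_eq_mul]

lemma eventually_integral_exp_mul_sq_projMeasure_le {l : ℝ} (hl : l < 1) :
    ∀ᶠ n in atTop, Integrable (fun t => exp (l * t ^ 2 / 2)) (projMeasure n) ∧
      ∫ t, exp (l * t ^ 2 / 2) ∂projMeasure n ≤ √(π / ((1 - l) / 4)) := by
  filter_upwards [eventually_ge_atTop 3,
    tendsto_natCast_atTop_atTop.eventually_ge_atTop (6 / (1 - l))] with n hn hnl
  have hnl' : 6 ≤ n * (1 - l) := (div_le_iff₀ (by linarith)).mp hnl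
  have hgauss : Integrable fun t : ℝ => exp (-((1 - l) / 4) * t ^ 2) :=
    integrable_exp_neg_mul_sq (by linarith)
  have hnonneg : ∀ t, 0 ≤ projDensity n t * exp (l * t ^ 2 / 2) :=
    fun t => mul_nonneg (projDensity_nonneg (by omega) t) (exp_pos _).le
  have hint : Integrable fun t => projDensity n t * exp (l * t ^ 2 / 2) :=
    hgauss.mono' ((measurable_projDensity n).mul (by fun_prop)).aestronglyMeasurable <|
      ae_of_all _ fun t => by
        rw [norm_of_nonneg (hnonneg t)]
        exact projDensity_mul_exp_le hn hnl' t
  refine ⟨(integrable_projMeasure_iff (by omega)).mpr hint, ?_⟩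
  rw [integral_projMeasure_eq (by omega), ← integral_gaussian]
  exact integral_mono_of_nonneg (ae_of_all _ hnonneg) hgauss
    (ae_of_all _ (projDensity_mul_exp_le hn hnl'))

lemma exists_pos_mul_one_add_sq_le {c l : ℝ} (h : c < l) : ∃ ε > 0, c * (1 + ε) ^ 2 ≤ l := by
  have hcont : Tendsto (fun ε : ℝ => c * (1 + ε) ^ 2) (𝓝 0) (𝓝 c) := by
    simpa using (by fun_prop : Continuous fun ε : ℝ => c * (1 + ε) ^ 2).tendsto 0
  have hsmall : ∀ᶠ ε in 𝓝[>] (0 : ℝ), c * (1 + ε) ^ 2 < l :=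
    nhdsWithin_le_nhds (hcont.eventually (gt_mem_nhds h))
  obtain ⟨ε, hε, hpos⟩ := (hsmall.and self_mem_nhdsWithin).exists
  exact ⟨ε, hpos, hε.le⟩

section ExpGrowth

variable {ι : Type*} [Fintype ι]

lemma sum_sq_mul_rpow_div_sqrt_le {d B : ℝ} (hd : 0 ≤ d) (e : ι → ℝ) {τ : ι → ℝ}
    (hτ : ∀ i, |τ i| ≤ B) :
    ∑ i, (τ i * d ^ (e i / 2) / √(∑ j, d ^ e j)) ^ 2 ≤ B ^ 2 := by
  set S := ∑ j, d ^ e j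
  have hS : 0 ≤ S := sum_nonneg fun j _ => rpow_nonneg hd _
  have hterm : ∀ i, (τ i * d ^ (e i / 2) / √S) ^ 2 = τ i ^ 2 * d ^ e i / S := fun i => by
    rw [div_pow, mul_pow, sq_sqrt hS, ← rpow_natCast (d ^ (e i / 2)), ← rpow_mul hd]
    norm_num
  calc ∑ i, (τ i * d ^ (e i / 2) / √S) ^ 2 = ∑ i, τ i ^ 2 * d ^ e i / S := sum_congr rfl
        fun i _ => hterm i
    _ ≤ ∑ i, B ^ 2 * d ^ e i / S := sum_le_sum fun i _ => by
        gcongr ?_ * _ / _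
        exact sq_le_sq' (abs_le.mp (hτ i)).1 (abs_le.mp (hτ i)).2
    _ = B ^ 2 * (S / S) := by rw [← sum_div, ← mul_sum, mul_div_assoc]
    _ ≤ B ^ 2 := mul_le_of_le_one_right (sq_nonneg B) (div_self_le_one S)

variable {σ : ℝ → ℝ} {c0 c l A : ℝ} {α : ι → ℝ}

lemma sq_comp_sum_mul_le_prod_exp (hgrow : ∀ u, σ u ^ 2 ≤ c0 * exp (c * u ^ 2 / 2))
    (hc0 : 0 ≤ c0) (hc : 0 ≤ c) (hα : ∑ i, α i ^ 2 ≤ A) (hcA : c * A ≤ l) (x : ι → ℝ) :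
    σ (∑ i, α i * x i) ^ 2 ≤ c0 * ∏ i, exp (l * x i ^ 2 / 2) := by
  have hx : 0 ≤ ∑ i, x i ^ 2 := by positivity
  have hexponent : c * (∑ i, α i * x i) ^ 2 ≤ l * ∑ i, x i ^ 2 :=
    calc c * (∑ i, α i * x i) ^ 2 ≤ c * (A * ∑ i, x i ^ 2) := by
          gcongr
          exact (sum_mul_sq_le_sq_mul_sq univ α x).trans (by gcongr)
      _ ≤ l * ∑ i, x i ^ 2 := by rw [← mul_assoc]; gcongr
  calc σ (∑ i, α i * x i) ^ 2 ≤ c0 * exp (c * (∑ i, α i * x i) ^ 2 / 2) := hgrow _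
    _ ≤ c0 * exp (l * (∑ i, x i ^ 2) / 2) := by gcongr
    _ = c0 * ∏ i, exp (l * x i ^ 2 / 2) := by rw [← exp_sum, mul_sum, sum_div]

lemma integral_sq_comp_sum_mul_le (μ : ι → Measure ℝ) [∀ i, SigmaFinite (μ i)]
    (hgrow : ∀ u, σ u ^ 2 ≤ c0 * exp (c * u ^ 2 / 2)) (hc0 : 0 ≤ c0) (hc : 0 ≤ c)
    (hα : ∑ i, α i ^ 2 ≤ A) (hcA : c * A ≤ l)
    (hint : ∀ i, Integrable (fun t => exp (l * t ^ 2 / 2)) (μ i)) :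
    ∫ x, σ (∑ i, α i * x i) ^ 2 ∂Measure.pi μ ≤ c0 * ∏ i, ∫ t, exp (l * t ^ 2 / 2) ∂μ i := by
  rw [← integral_fintype_prod_eq_prod (fun _ t => exp (l * t ^ 2 / 2)), ← integral_const_mul]
  exact integral_mono_of_nonneg (ae_of_all _ fun _ => sq_nonneg _)
    ((Integrable.fintype_prod hint).const_mul c0)
    (ae_of_all _ (sq_comp_sum_mul_le_prod_exp hgrow hc0 hc hα hcA))

end ExpGrowth

theorem uniform_second_moment_bound_general
    (Qc : ℕ)
    (η κ : Fin Qc → ℝ) (hη : ∀ q, 0 < η q)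
    (σ : ℝ → ℝ)
    (c0 c1 : ℝ) (hc1 : c1 < 1)
    (hgrow : ∀ u : ℝ, σ u ^ 2 ≤ c0 * Real.exp (c1 * u ^ 2 / 2)) :
    ∃ ε0 : ℝ, 0 < ε0 ∧ ∃ d0 : ℕ, ∃ M : ℝ,
      ∀ d : ℕ, d0 ≤ d →
        ∀ τ : Fin Qc → ℝ, (∀ q, |τ q - 1| ≤ ε0) →
          ∫ x : Fin Qc → ℝ,
              σ (∑ q, (τ q * (d : ℝ) ^ ((η q + κ q) / 2) /
                    Real.sqrt (∑ q', (d : ℝ) ^ (η q' + κ q'))) * x q) ^ 2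
            ∂(Measure.pi fun q => projMeasure ⌈(d : ℝ) ^ (η q)⌉₊) ≤ M := by
  have hc0 : 0 ≤ c0 := by simpa using (sq_nonneg (σ 0)).trans (hgrow 0)
  have hgrow' : ∀ u, σ u ^ 2 ≤ c0 * exp (max c1 0 * u ^ 2 / 2) := fun u =>
    (hgrow u).trans (by gcongr; exact le_max_left _ _)
  obtain ⟨l, hcl, hl1⟩ := exists_between (max_lt hc1 one_pos)
  obtain ⟨ε0, hε0, hcε⟩ := exists_pos_mul_one_add_sq_le hcl
  obtain ⟨d0, hd0⟩ := eventually_atTop.mp <| eventually_all.mpr fun q =>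
    (tendsto_nat_ceil_atTop.comp ((tendsto_rpow_atTop (hη q)).comp
      tendsto_natCast_atTop_atTop)).eventually (eventually_integral_exp_mul_sq_projMeasure_le hl1)
  refine ⟨ε0, hε0, d0, c0 * √(π / ((1 - l) / 4)) ^ Qc, fun d hd τ hτ => ?_⟩
  have hτ' : ∀ q, |τ q| ≤ 1 + ε0 := fun q => by
    linarith [abs_sub_abs_le_abs_sub (τ q) 1, abs_one (α := ℝ), hτ q]
  calc _ ≤ c0 * ∏ q, ∫ t, exp (l * t ^ 2 / 2) ∂projMeasure ⌈(d : ℝ) ^ η q⌉₊ :=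
        integral_sq_comp_sum_mul_le _ hgrow' hc0 (le_max_right _ _)
          (sum_sq_mul_rpow_div_sqrt_le d.cast_nonneg _ hτ') hcε fun q => (hd0 d hd q).1
    _ ≤ c0 * ∏ _q : Fin Qc, √(π / ((1 - l) / 4)) := by
        gcongr with q
        exact (hd0 d hd q).2
    _ = c0 * √(π / ((1 - l) / 4)) ^ Qc := by rw [prod_const, card_univ, Fintype.card_fin]

/-- Uniform second-moment bound: let `σ(u)² ≤ c₀exp(c₁u²/2)` with `c₁ < 1`. With
independent projections `x^{(q)} ~ projMeasure(d_q)` where `d_q = ⌈d^{η_q}⌉`, and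
coefficients `α_q = τ_q·d^{(η_q+κ_q)/2}/√(Σ_{q'} d^{η_{q'}+κ_{q'}})` (so `α_{q₀} → 1`
for the unique maximizer `q₀` of `η+κ` and `α_q → 0` otherwise), there exist `ε₀ > 0`
and `d₀` such that `sup_{d ≥ d₀} sup_{τ ∈ [1-ε₀,1+ε₀]^Q} E[σ(Σ_q α_q x^{(q)})²] < ∞`. -/
theorem uniform_second_moment_bound
    (Qc : ℕ) (q0 : Fin Qc)
    (η κ : Fin Qc → ℝ) (hη : ∀ q, 0 < η q) (hκ : ∀ q, 0 ≤ κ q)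
    (hmax : ∀ q, q ≠ q0 → η q + κ q < η q0 + κ q0)
    (σ : ℝ → ℝ) (hmeas : Measurable σ)
    (c0 c1 : ℝ) (hc0 : 0 < c0) (hc1 : c1 < 1)
    (hgrow : ∀ u : ℝ, σ u ^ 2 ≤ c0 * Real.exp (c1 * u ^ 2 / 2)) :
    ∃ ε0 : ℝ, 0 < ε0 ∧ ∃ d0 : ℕ, ∃ M : ℝ,
      ∀ d : ℕ, d0 ≤ d →
        ∀ τ : Fin Qc → ℝ, (∀ q, |τ q - 1| ≤ ε0) →
          ∫ x : Fin Qc → ℝ,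
              σ (∑ q, (τ q * (d : ℝ) ^ ((η q + κ q) / 2) /
                    Real.sqrt (∑ q', (d : ℝ) ^ (η q' + κ q'))) * x q) ^ 2
            ∂(Measure.pi fun q => projMeasure ⌈(d : ℝ) ^ (η q)⌉₊) ≤ M :=
  uniform_second_moment_bound_general Qc η κ hη σ c0 c1 hc1 hgrow
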